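/- arXiv:1804.05126 — 2 statements merged into one kernel-verified Lean document; each statement's English description precedes it below -/
import Mathlib

section
/- Let A be a real N×N matrix and b_0, b_1, …, b_p ∈ ℝ^N. Define w : ℝ → ℝ^N by w(τ) = Σ_{j=0}^{p} τ^j φ_j(τA) b_j. Then w is differentiable, w(0) = b_0, and for all τ ∈ ℝ, w'(τ) = A w(τ) + b_1 + τ b_2 + … + (τ^{p−1}/(p−1)!) b_p = A w(τ) + Σ_{j=1}^{p} (τ^{j−1}/(j−1)!) b_j. -/
open Matrix MeasureTheory
open scoped Nat

attribute [local instance] Matrix.normedAddCommGroup Matrix.normedSpace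

/-- The matrix `φ`-functions: `φ₀(M) = e^M` and
`φ_k(M) = ∫_0^1 e^{(1-θ)M} θ^{k-1}/(k-1)! dθ` for `k ≥ 1`. -/
noncomputable def phi {n : ℕ} (k : ℕ) (M : Matrix (Fin n) (Fin n) ℝ) :
    Matrix (Fin n) (Fin n) ℝ :=
  if k = 0 then NormedSpace.exp M
  else ∫ θ in (0:ℝ)..1, ((θ ^ (k - 1) / (k - 1)! : ℝ)) • NormedSpace.exp ((1 - θ) • M)

/-! Substituting `s = tθ` gives `t^{k+1} φ_{k+1}(tA) = e^{tA} ∫_0^t s^k/k! e^{-sA} ds`, so by the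
product rule and the fundamental theorem of calculus this term solves
`X' = A X + t^k/k! I`, while `φ_0(tA) = e^{tA}` solves `X' = A X`. Applying each term to `b_j` and
summing gives the differential equation for `w`; at `t = 0` only `φ_0(0) b_0 = b_0` survives. -/

section MatrixCalculus

variable {𝕜 : Type*} [RCLike 𝕜] {m n : Type*} [Fintype m] [DecidableEq m] [Fintype n]

theorem Matrix.exp_add_smul (A : Matrix m m 𝕜) (s u : 𝕜) :
    NormedSpace.exp ((s + u) • A) = NormedSpace.exp (s • A) * NormedSpace.exp (u • A) := by
  rw [add_smul, Matrix.exp_add_of_commute _ _ (((Commute.refl A).smul_left s).smul_right u)]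

/-- Derivatives only see the topology, so the operator norm, which makes matrices a normed
algebra, can be used instead of the entrywise sup norm `Matrix.normedAddCommGroup`. -/
theorem Matrix.hasDerivAt_exp_smul (A : Matrix m m 𝕜) (τ : 𝕜) :
    HasDerivAt (fun t : 𝕜 => NormedSpace.exp (t • A)) (A * NormedSpace.exp (τ • A)) τ :=
  @hasDerivAt_exp_smul_const' 𝕜 _ _ Matrix.linftyOpNormedRing Matrix.linftyOpNormedAlgebra
    (inferInstanceAs (CompleteSpace (m → m → 𝕜))) A τ

theorem Matrix.continuous_exp_smul (A : Matrix m m 𝕜) :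
    Continuous fun t : 𝕜 => NormedSpace.exp (t • A) :=
  continuous_iff_continuousAt.2 fun τ => (Matrix.hasDerivAt_exp_smul A τ).continuousAt

theorem HasDerivAt.matrix_mul {f g : 𝕜 → Matrix m m 𝕜} {f' g' : Matrix m m 𝕜} {x : 𝕜}
    (hf : HasDerivAt f f' x) (hg : HasDerivAt g g' x) :
    HasDerivAt (fun t => f t * g t) (f' * g x + f x * g') x := by
  rw [add_comm]
  exact (LinearMap.mul 𝕜 (Matrix m m 𝕜)).toContinuousBilinearMap.hasDerivAt_of_bilinear
    (u := f) (v := g) (fun _ => hf) (fun _ => hg)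

end MatrixCalculus

theorem HasDerivAt.matrix_mulVec {𝕜 m n : Type*} [RCLike 𝕜] [Fintype m] [Fintype n]
    {f : 𝕜 → Matrix m n 𝕜} {f' : Matrix m n 𝕜} {x : 𝕜}
    (hf : HasDerivAt f f' x) (v : n → 𝕜) :
    HasDerivAt (fun t => f t *ᵥ v) (f' *ᵥ v) x :=
  ((Matrix.mulVecBilin 𝕜 𝕜).flip v).toContinuousLinearMap.hasFDerivAt.comp_hasDerivAt (f := f) x hf

section PhiFunctions

variable {n : ℕ} (A : Matrix (Fin n) (Fin n) ℝ)

theorem phi_zero (M : Matrix (Fin n) (Fin n) ℝ) : phi 0 M = NormedSpace.exp M := rfl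

theorem phi_succ (k : ℕ) (M : Matrix (Fin n) (Fin n) ℝ) :
    phi (k + 1) M = ∫ θ in (0:ℝ)..1, (θ ^ k / k ! : ℝ) • NormedSpace.exp ((1 - θ) • M) := by
  simp [phi]

theorem continuous_pow_div_factorial_smul_exp_neg_smul (k : ℕ) :
    Continuous fun s : ℝ => (s ^ k / k ! : ℝ) • NormedSpace.exp ((-s) • A) :=
  ((continuous_pow k).div_const _).smul
    ((Matrix.continuous_exp_smul A).comp continuous_neg)

theorem pow_succ_smul_phi_succ (k : ℕ) (t : ℝ) :
    t ^ (k + 1) • phi (k + 1) (t • A) =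
      NormedSpace.exp (t • A) * ∫ s in (0:ℝ)..t, (s ^ k / k ! : ℝ) • NormedSpace.exp ((-s) • A) := by
  set f : ℝ → Matrix (Fin n) (Fin n) ℝ := fun s => (s ^ k / k ! : ℝ) • NormedSpace.exp ((-s) • A)
  have hf := continuous_pow_div_factorial_smul_exp_neg_smul A k
  let L := (LinearMap.mul ℝ (Matrix (Fin n) (Fin n) ℝ)).toContinuousBilinearMap
    (NormedSpace.exp (t • A))
  have integrand : ∀ θ : ℝ, t ^ k • (θ ^ k / k ! : ℝ) • NormedSpace.exp ((1 - θ) • t • A) =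
      L (f (t * θ)) := by
    intro θ
    rw [smul_smul (1 - θ), show (1 - θ) * t = t + -(t * θ) by ring, Matrix.exp_add_smul]
    simp only [L, f, LinearMap.toContinuousBilinearMap_apply, LinearMap.mul_apply',
      mul_smul_comm, smul_smul, mul_pow]
    congr 1
    ring
  calc t ^ (k + 1) • phi (k + 1) (t • A)
      = t • ∫ θ in (0:ℝ)..1, t ^ k • (θ ^ k / k ! : ℝ) • NormedSpace.exp ((1 - θ) • t • A) := by
        rw [phi_succ, intervalIntegral.integral_smul, smul_smul, pow_succ']
    _ = t • L (∫ θ in (0:ℝ)..1, f (t * θ)) := by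
        simp only [integrand]
        exact congrArg (t • ·) (L.intervalIntegral_comp_comm
          ((hf.comp (continuous_const_mul t)).intervalIntegrable 0 1))
    _ = NormedSpace.exp (t • A) * ∫ s in (0:ℝ)..t, f s := by
        rw [← L.map_smul, intervalIntegral.smul_integral_comp_mul_left, mul_zero, mul_one]
        rfl

theorem hasDerivAt_pow_succ_smul_phi_succ (k : ℕ) (τ : ℝ) :
    HasDerivAt (fun t : ℝ => t ^ (k + 1) • phi (k + 1) (t • A))
      (A * (τ ^ (k + 1) • phi (k + 1) (τ • A)) + (τ ^ k / k ! : ℝ) • 1) τ := by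
  have hf := continuous_pow_div_factorial_smul_exp_neg_smul A k
  have := (Matrix.hasDerivAt_exp_smul A τ).matrix_mul (hf.integral_hasStrictDerivAt 0 τ).hasDerivAt
  simp only [pow_succ_smul_phi_succ]
  convert this using 1
  rw [mul_assoc, mul_smul_comm, ← Matrix.exp_add_smul, add_neg_cancel, zero_smul,
    NormedSpace.exp_zero]

end PhiFunctions

theorem stmt9 {N p : ℕ} (A : Matrix (Fin N) (Fin N) ℝ) (b : ℕ → Fin N → ℝ)
    (w : ℝ → Fin N → ℝ)
    (hw : ∀ t : ℝ, w t = ∑ j ∈ Finset.range (p + 1),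
        t ^ j • (phi j (t • A)).mulVec (b j)) :
    w 0 = b 0 ∧
      ∀ τ : ℝ,
        HasDerivAt w
          (A.mulVec (w τ) + ∑ j ∈ Finset.range p, (τ ^ j / (j ! : ℝ)) • b (j + 1))
          τ := by
  have hw' : w = fun t => ∑ k ∈ Finset.range p, (t ^ (k + 1) • phi (k + 1) (t • A)) *ᵥ b (k + 1)
      + NormedSpace.exp (t • A) *ᵥ b 0 := by
    funext t
    simp [hw, Finset.sum_range_succ', smul_mulVec, phi_zero]
  refine ⟨by simp [hw', NormedSpace.exp_zero], fun τ => ?_⟩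
  rw [hw']
  refine ((HasDerivAt.fun_sum fun k _ =>
    (hasDerivAt_pow_succ_smul_phi_succ A k τ).matrix_mulVec (b (k + 1))).add
      ((Matrix.hasDerivAt_exp_smul A τ).matrix_mulVec (b 0))).congr_deriv ?_
  simp only [add_mulVec, mulVec_add, mulVec_sum, mulVec_mulVec, smul_mulVec, one_mulVec,
    Matrix.mul_smul, mulVec_smul, Finset.sum_add_distrib]
  abel
end

section
/- Let A be a real N×N matrix and b_0, b_1, …, b_p ∈ ℝ^N, and define w : ℝ → ℝ^N by w(t) = Σ_{j=0}^{p} t^j φ_j(tA) b_j. Fix t_i ∈ ℝ and τ_i ∈ ℝ, and define vectors w̃_0, …, w̃_p recursively by w̃_0 = w(t_i) and w̃_j = A w̃_{j−1} + Σ_{ℓ=0}^{p−j} (t_i^ℓ/ℓ!) b_{j+ℓ} for j = 1, …, p. Then w(t_i + τ_i) = τ_i^p φ_p(τ_i A) w̃_p + Σ_{j=0}^{p−1} (τ_i^j/j!) w̃_j. -/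
open Matrix MeasureTheory
open scoped Nat

attribute [local instance] Matrix.normedAddCommGroup Matrix.normedSpace

/-!
Integrating the exponential series termwise against `θ^(k-1) / (k-1)!` (a Beta integral) gives
`φ_k(sM) = ∑ᵢ sⁱ Mⁱ / (i + k)!`. Hence `w t = ∑ₘ tᵐ/m! • cₘ` with
`cₘ = ∑_{j ≤ min m p} A^(m-j) bⱼ`, an entire series, and the claim is its Taylor expansion
at `tᵢ`. The coefficients satisfy `cₘ₊₁ = A cₘ + bₘ₊₁` (with `bₘ₊₁ = 0` once `m + 1 > p`), so
the derivatives `dⱼ = w⁽ʲ⁾(tᵢ)` obey the recursion defining `w̃ⱼ` for `j ≤ p` and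
`dₖ₊ₚ = Aᵏ dₚ` beyond it; the Taylor tail `∑_{j ≥ p} τʲ/j! • dⱼ` is then `τᵖ φₚ(τA) dₚ`.
-/

open Finset

lemma sum_antidiagonal_pow_div_factorial_mul (x y : ℝ) (n : ℕ) :
    ∑ q ∈ antidiagonal n, x ^ q.1 / q.1 ! * (y ^ q.2 / q.2 !) = (x + y) ^ n / n ! := by
  rw [(Commute.all x y).add_pow', sum_div]
  refine sum_congr rfl fun q hq => ?_
  obtain rfl := mem_antidiagonal.mp hq
  have h := Nat.add_choose_mul_factorial_mul_factorial q.2 q.1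
  rw [add_comm q.2] at h
  have hc : ((q.1 + q.2).choose q.1 : ℝ) ≠ 0 := by
    exact_mod_cast (Nat.choose_pos (Nat.le_add_right _ _)).ne'
  rw [nsmul_eq_mul, ← h]
  push_cast
  field_simp

lemma integral_pow_mul_one_sub_pow (a c : ℕ) :
    ∫ θ in (0:ℝ)..1, θ ^ a * (1 - θ) ^ c = a ! * c ! / (a + c + 1)! := by
  have hΓ := Complex.Gamma_mul_Gamma_eq_betaIntegral (s := a + 1) (t := c + 1)
    (by simp; positivity) (by simp; positivity)
  have hB : Complex.betaIntegral (a + 1) (c + 1)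
      = ((∫ θ in (0:ℝ)..1, θ ^ a * (1 - θ) ^ c : ℝ) : ℂ) := by
    rw [Complex.betaIntegral, ← intervalIntegral.integral_ofReal]
    refine intervalIntegral.integral_congr fun θ _ => ?_
    simp only [add_sub_cancel_right, Complex.cpow_natCast]
    push_cast; rfl
  rw [show (a : ℂ) + 1 + (c + 1) = ((a + c + 1 : ℕ) : ℂ) + 1 by push_cast; ring,
    Complex.Gamma_nat_eq_factorial, Complex.Gamma_nat_eq_factorial,
    Complex.Gamma_nat_eq_factorial, hB] at hΓ
  have hne : ((a + c + 1)! : ℝ) ≠ 0 := by positivity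
  rw [eq_div_iff hne, mul_comm]
  exact_mod_cast hΓ.symm

lemma integral_pow_div_factorial_mul_one_sub_pow (k i : ℕ) (s : ℝ) :
    ∫ θ in (0:ℝ)..1, θ ^ k / k ! * (((1 - θ) * s) ^ i / i !) = s ^ i / (i + (k + 1))! := by
  simp_rw [mul_pow, show ∀ θ : ℝ, θ ^ k / k ! * ((1 - θ) ^ i * s ^ i / i !)
    = s ^ i / (k ! * i !) * (θ ^ k * (1 - θ) ^ i) from fun θ => by ring]
  rw [intervalIntegral.integral_const_mul, integral_pow_mul_one_sub_pow,
    show i + (k + 1) = k + i + 1 by ring]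
  field_simp

lemma abs_pow_div_factorial_mul_one_sub_pow_le {θ : ℝ} (hθ : θ ∈ Set.Icc (0:ℝ) 1)
    (k i : ℕ) (s : ℝ) : |θ ^ k / k ! * (((1 - θ) * s) ^ i / i !)| ≤ |s| ^ i / i ! := by
  have h1θ : 0 ≤ 1 - θ := sub_nonneg.2 hθ.2
  rw [abs_mul, abs_div, abs_div, abs_pow, abs_pow, abs_mul, mul_pow, Nat.abs_cast,
    Nat.abs_cast, abs_of_nonneg hθ.1, abs_of_nonneg h1θ]
  have h1 : θ ^ k / k ! ≤ 1 :=
    div_le_one_of_le₀ ((pow_le_one₀ hθ.1 hθ.2).trans (by exact_mod_cast k.factorial_pos))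
      (by positivity)
  have h0 : 0 ≤ (1 - θ) ^ i := pow_nonneg h1θ i
  have h2 : (1 - θ) ^ i ≤ 1 := pow_le_one₀ h1θ (by linarith [hθ.1])
  calc θ ^ k / k ! * ((1 - θ) ^ i * |s| ^ i / i !) ≤ 1 * (1 * |s| ^ i / i !) := by gcongr
    _ = |s| ^ i / i ! := by ring

lemma LinearMap.exists_norm_pow_apply_le {V : Type*} [NormedAddCommGroup V] [NormedSpace ℝ V]
    [FiniteDimensional ℝ V] (f : V →ₗ[ℝ] V) :
    ∃ R, 1 ≤ R ∧ ∀ k x, ‖(f ^ k) x‖ ≤ R ^ k * ‖x‖ := by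
  let L := LinearMap.toContinuousLinearMap f
  refine ⟨max 1 ‖L‖, le_max_left _ _, fun k x => ?_⟩
  induction k with
  | zero => simp
  | succ k ih =>
    calc ‖(f ^ (k + 1)) x‖ = ‖L ((f ^ k) x)‖ := by rw [pow_succ', Module.End.mul_apply]; rfl
      _ ≤ max 1 ‖L‖ * ‖(f ^ k) x‖ := (L.le_opNorm _).trans (by gcongr; exact le_max_right _ _)
      _ ≤ max 1 ‖L‖ * (max 1 ‖L‖ ^ k * ‖x‖) := by gcongr
      _ = max 1 ‖L‖ ^ (k + 1) * ‖x‖ := by ring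

section MatrixSeries

variable {m : Type*} [Fintype m]

lemma HasSum.matrix_mulVec_right {ι : Type*} {f : ι → Matrix m m ℝ} {M : Matrix m m ℝ}
    (h : HasSum f M) (v : m → ℝ) : HasSum (fun i => f i *ᵥ v) (M *ᵥ v) :=
  h.map (mulVec.addMonoidHomLeft v) (continuous_id.matrix_mulVec continuous_const)

lemma HasSum.matrix_mulVec_left {ι : Type*} {f : ι → m → ℝ} {v : m → ℝ}
    (h : HasSum f v) (M : Matrix m m ℝ) : HasSum (fun i => M *ᵥ f i) (M *ᵥ v) :=
  h.map (mulVecLin M) (continuous_const.matrix_mulVec continuous_id)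

variable [DecidableEq m]

-- The entrywise norm in force is not submultiplicative; the operator norm has the same topology.
lemma Matrix.hasSum_exp (M : Matrix m m ℝ) :
    HasSum (fun n => (n !⁻¹ : ℝ) • M ^ n) (NormedSpace.exp M) := by
  open scoped Matrix.Norms.Operator in exact NormedSpace.exp_series_hasSum_exp' M

lemma Matrix.exists_norm_pow_le (M : Matrix m m ℝ) :
    ∃ R, 1 ≤ R ∧ ∀ k, ‖M ^ k‖ ≤ R ^ k * ‖(1 : Matrix m m ℝ)‖ := by
  obtain ⟨R, hR1, hR⟩ := (LinearMap.mulLeft ℝ M).exists_norm_pow_apply_le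
  exact ⟨R, hR1, fun k => by simpa [LinearMap.pow_mulLeft] using hR k 1⟩

lemma Matrix.exists_norm_pow_mulVec_le (M : Matrix m m ℝ) :
    ∃ R, 1 ≤ R ∧ ∀ k v, ‖(M ^ k) *ᵥ v‖ ≤ R ^ k * ‖v‖ := by
  obtain ⟨R, hR1, hR⟩ := (toLin' M).exists_norm_pow_apply_le
  exact ⟨R, hR1, fun k v => by simpa [← toLin'_pow] using hR k v⟩

end MatrixSeries

lemma hasSum_phi_smul {n : ℕ} (k : ℕ) (M : Matrix (Fin n) (Fin n) ℝ) (s : ℝ) :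
    HasSum (fun i => (s ^ i / (i + k)!) • M ^ i) (phi k (s • M)) := by
  cases k with
  | zero =>
    simpa [phi, smul_pow, smul_smul, div_eq_inv_mul] using Matrix.hasSum_exp (s • M)
  | succ k =>
    obtain ⟨R, -, hR⟩ := M.exists_norm_pow_le
    rw [phi, if_neg k.succ_ne_zero, Nat.add_sub_cancel]
    have hlim (θ : ℝ) : HasSum (fun i => (θ ^ k / k ! * (((1 - θ) * s) ^ i / i !)) • M ^ i)
        ((θ ^ k / k !) • NormedSpace.exp ((1 - θ) • s • M)) := by
      simpa [smul_smul, smul_pow, ← mul_assoc, div_eq_mul_inv, mul_comm, mul_left_comm]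
        using (Matrix.hasSum_exp ((1 - θ) • s • M)).const_smul (θ ^ k / k !)
    simp_rw [← integral_pow_div_factorial_mul_one_sub_pow k, ←
      intervalIntegral.integral_smul_const]
    refine intervalIntegral.hasSum_integral_of_dominated_convergence
      (fun i _ => ‖(1 : Matrix (Fin n) (Fin n) ℝ)‖ * ((|s| * R) ^ i / i !))
      (fun i => by fun_prop) (fun i => .of_forall fun θ hθ => ?_)
      (.of_forall fun _ _ => (Real.summable_pow_div_factorial _).mul_left _)
      intervalIntegrable_const (.of_forall fun θ _ => hlim θ)
    rw [Set.uIoc_of_le zero_le_one] at hθ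
    calc ‖(θ ^ k / k ! * (((1 - θ) * s) ^ i / i !)) • M ^ i‖
        ≤ |s| ^ i / i ! * (R ^ i * ‖(1 : Matrix (Fin n) (Fin n) ℝ)‖) := by
          rw [norm_smul, Real.norm_eq_abs]
          gcongr
          exacts [abs_pow_div_factorial_mul_one_sub_pow_le (Set.Ioc_subset_Icc_self hθ) k i s,
            hR i]
      _ = ‖(1 : Matrix (Fin n) (Fin n) ℝ)‖ * ((|s| * R) ^ i / i !) := by ring

lemma hasSum_phi_smul_mulVec {n : ℕ} (k : ℕ) (M : Matrix (Fin n) (Fin n) ℝ) (s : ℝ)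
    (v : Fin n → ℝ) :
    HasSum (fun i => (s ^ i / (i + k)!) • ((M ^ i) *ᵥ v)) (phi k (s • M) *ᵥ v) := by
  simpa only [smul_mulVec] using (hasSum_phi_smul k M s).matrix_mulVec_right v

section ExpSum

variable {E : Type*} [NormedAddCommGroup E] [NormedSpace ℝ E]

noncomputable def expSum (a : ℕ → E) (t : ℝ) : E := ∑' m, (t ^ m / m !) • a m

variable {a : ℕ → E} {C K : ℝ}

lemma summable_norm_pow_div_factorial_smul (ha : ∀ n, ‖a n‖ ≤ C * K ^ n) (t : ℝ) :
    Summable fun m => ‖(t ^ m / m !) • a m‖ := by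
  refine .of_nonneg_of_le (fun _ => norm_nonneg _) (fun m => ?_)
    ((Real.summable_pow_div_factorial (|t| * K)).mul_left C)
  rw [norm_smul, Real.norm_eq_abs, abs_div, abs_pow, Nat.abs_cast]
  calc |t| ^ m / m ! * ‖a m‖ ≤ |t| ^ m / m ! * (C * K ^ m) := by gcongr; exact ha m
    _ = C * ((|t| * K) ^ m / m !) := by ring

variable [CompleteSpace E]

lemma hasSum_expSum (ha : ∀ n, ‖a n‖ ≤ C * K ^ n) (t : ℝ) :
    HasSum (fun m => (t ^ m / m !) • a m) (expSum a t) :=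
  (summable_norm_pow_div_factorial_smul ha t).of_norm.hasSum

lemma hasSum_expSum_comp_add (ha : ∀ n, ‖a n‖ ≤ C * K ^ n) (j : ℕ) (t : ℝ) :
    HasSum (fun m => (t ^ m / m !) • a (m + j)) (expSum (fun m => a (m + j)) t) :=
  hasSum_expSum (C := C * K ^ j) (K := K)
    (fun m => by rw [mul_assoc, ← pow_add, add_comm j]; exact ha _) t

lemma hasSum_expSum_add (ha : ∀ n, ‖a n‖ ≤ C * K ^ n) (s τ : ℝ) :
    HasSum (fun j => (τ ^ j / j !) • expSum (fun m => a (m + j)) s) (expSum a (s + τ)) := by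
  set g : ℕ × ℕ → E := fun q => (τ ^ q.1 / q.1 ! * (s ^ q.2 / q.2 !)) • a (q.1 + q.2)
  have hg : Summable g := by
    refine .of_norm_bounded (summable_mul_of_summable_norm
      (f := fun j => C * ((|τ| * K) ^ j / j !)) (g := fun i => (|s| * K) ^ i / i !)
      (summable_norm_iff.mpr ((Real.summable_pow_div_factorial _).mul_left C))
      (summable_norm_iff.mpr (Real.summable_pow_div_factorial _))) fun q => ?_
    rw [norm_smul, Real.norm_eq_abs, abs_mul, abs_div, abs_div, abs_pow, abs_pow,
      Nat.abs_cast, Nat.abs_cast]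
    calc |τ| ^ q.1 / q.1 ! * (|s| ^ q.2 / q.2 !) * ‖a (q.1 + q.2)‖
        ≤ |τ| ^ q.1 / q.1 ! * (|s| ^ q.2 / q.2 !) * (C * K ^ (q.1 + q.2)) := by
          gcongr; exact ha _
      _ = C * ((|τ| * K) ^ q.1 / q.1 !) * ((|s| * K) ^ q.2 / q.2 !) := by ring
  have fiber (j : ℕ) :
      HasSum (fun i => g (j, i)) ((τ ^ j / j !) • expSum (fun m => a (m + j)) s) := by
    simpa only [g, smul_smul, add_comm j] using
      (hasSum_expSum_comp_add ha j s).const_smul (τ ^ j / j !)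
  have diagonal : HasSum (fun n => ((s + τ) ^ n / n !) • a n) (∑' q, g q) := by
    refine (HasAntidiagonal.sigmaAntidiagonalEquivProd.hasSum_iff.mpr hg.hasSum).sigma
      fun n => ?_
    convert hasSum_fintype _ using 1
    change _ = ∑ q : antidiagonal n, g q
    rw [sum_coe_sort (antidiagonal n) g, add_comm s, ← sum_antidiagonal_pow_div_factorial_mul,
      sum_smul]
    exact sum_congr rfl fun q hq => by rw [← mem_antidiagonal.mp hq]
  rw [(hasSum_expSum ha _).unique diagonal]
  exact hg.hasSum.prod_fiberwise fiber

end ExpSum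

section SeriesCoeff

variable {n : ℕ} (A : Matrix (Fin n) (Fin n) ℝ) (b : ℕ → Fin n → ℝ) (p : ℕ)

-- `w = expSum (seriesCoeff A b p)`, i.e. `seriesCoeff A b p m = w⁽ᵐ⁾(0)`.
noncomputable def seriesCoeff (m : ℕ) : Fin n → ℝ :=
  ∑ j ∈ range (p + 1), if j ≤ m then (A ^ (m - j)) *ᵥ b j else 0

lemma seriesCoeff_succ (m : ℕ) :
    seriesCoeff A b p (m + 1) =
      A *ᵥ seriesCoeff A b p m + if m + 1 ≤ p then b (m + 1) else 0 := by
  have hterm (j : ℕ) : (if j ≤ m + 1 then (A ^ (m + 1 - j)) *ᵥ b j else 0)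
      = A *ᵥ (if j ≤ m then (A ^ (m - j)) *ᵥ b j else 0) + if j = m + 1 then b j else 0 := by
    rcases lt_trichotomy j (m + 1) with h | rfl | h
    · rw [if_pos h.le, if_pos (by omega), if_neg h.ne, add_zero, mulVec_mulVec, ← pow_succ',
        Nat.sub_add_comm (by omega)]
    · simp
    · rw [if_neg (by omega), if_neg (by omega), if_neg h.ne', mulVec_zero, add_zero]
  simp only [seriesCoeff, hterm, sum_add_distrib, mulVec_sum, sum_ite_eq', mem_range,
    Nat.lt_succ_iff]

lemma seriesCoeff_add_of_le {m : ℕ} (hm : p ≤ m) (k : ℕ) :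
    seriesCoeff A b p (m + k) = (A ^ k) *ᵥ seriesCoeff A b p m := by
  induction k with
  | zero => simp
  | succ k ih =>
    rw [← add_assoc, seriesCoeff_succ, if_neg (by omega), ih, mulVec_mulVec, ← pow_succ',
      add_zero]

lemma exists_norm_seriesCoeff_le : ∃ C K, ∀ m, ‖seriesCoeff A b p m‖ ≤ C * K ^ m := by
  obtain ⟨R, hR1, hR⟩ := A.exists_norm_pow_mulVec_le
  refine ⟨∑ j ∈ range (p + 1), ‖b j‖, R, fun m => (norm_sum_le _ _).trans ?_⟩
  rw [sum_mul]
  refine sum_le_sum fun j _ => ?_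
  split_ifs with hj
  · calc ‖(A ^ (m - j)) *ᵥ b j‖ ≤ R ^ (m - j) * ‖b j‖ := hR _ _
      _ ≤ ‖b j‖ * R ^ m := by rw [mul_comm]; gcongr; exact m.sub_le j
  · rw [norm_zero]; positivity

lemma expSum_seriesCoeff (t : ℝ) :
    expSum (seriesCoeff A b p) t = ∑ j ∈ range (p + 1), t ^ j • phi j (t • A) *ᵥ b j := by
  obtain ⟨C, K, hc⟩ := exists_norm_seriesCoeff_le A b p
  refine (hasSum_expSum hc t).unique ?_
  simp only [seriesCoeff, smul_sum]
  refine hasSum_sum fun j _ => (hasSum_nat_add_iff' j).mp ?_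
  rw [sum_eq_zero fun i hi => by rw [if_neg (by simp at hi; omega), smul_zero], sub_zero]
  simpa [smul_smul, pow_add, mul_div_assoc, mul_comm] using
    (hasSum_phi_smul_mulVec j A t (b j)).const_smul (t ^ j)

end SeriesCoeff

section DerivVec

variable {n : ℕ} (A : Matrix (Fin n) (Fin n) ℝ) (b : ℕ → Fin n → ℝ) (p : ℕ) (t : ℝ)

-- `derivVec A b p t j = w⁽ʲ⁾(t)`; at `t = tᵢ` these are the vectors `w̃ⱼ`.
noncomputable def derivVec (j : ℕ) : Fin n → ℝ :=
  expSum (fun m => seriesCoeff A b p (m + j)) t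

lemma hasSum_derivVec (j : ℕ) :
    HasSum (fun m => (t ^ m / m !) • seriesCoeff A b p (m + j)) (derivVec A b p t j) :=
  let ⟨_, _, hc⟩ := exists_norm_seriesCoeff_le A b p
  hasSum_expSum_comp_add hc j t

lemma derivVec_succ {j : ℕ} (hj : j + 1 ≤ p) :
    derivVec A b p t (j + 1) = A *ᵥ derivVec A b p t j +
      ∑ ℓ ∈ range (p - (j + 1) + 1), (t ^ ℓ / ℓ !) • b (j + 1 + ℓ) := by
  have hpoly : HasSum (fun m => (t ^ m / m !) • if m + j + 1 ≤ p then b (m + j + 1) else 0)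
      (∑ ℓ ∈ range (p - (j + 1) + 1), (t ^ ℓ / ℓ !) • b (j + 1 + ℓ)) := by
    have hsupp : ∑ ℓ ∈ range (p - (j + 1) + 1), (t ^ ℓ / ℓ !) • b (j + 1 + ℓ)
        = ∑ ℓ ∈ range (p - (j + 1) + 1),
            (t ^ ℓ / ℓ !) • if ℓ + j + 1 ≤ p then b (ℓ + j + 1) else 0 :=
      sum_congr rfl fun ℓ hℓ => by
        rw [mem_range] at hℓ
        rw [if_pos (by omega), show ℓ + j + 1 = j + 1 + ℓ by omega]
    rw [hsupp]
    exact hasSum_sum_of_ne_finset_zero fun m hm => by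
      rw [mem_range] at hm
      rw [if_neg (by omega), smul_zero]
  refine (hasSum_derivVec A b p t (j + 1)).unique ?_
  convert ((hasSum_derivVec A b p t j).matrix_mulVec_left A).add hpoly using 2 with m
  rw [← add_assoc, seriesCoeff_succ, mulVec_smul, smul_add]

lemma derivVec_add (k : ℕ) : derivVec A b p t (k + p) = (A ^ k) *ᵥ derivVec A b p t p := by
  refine (hasSum_derivVec A b p t (k + p)).unique ?_
  convert (hasSum_derivVec A b p t p).matrix_mulVec_left (A ^ k) using 2 with m
  rw [mulVec_smul, ← seriesCoeff_add_of_le A b p (Nat.le_add_left p m), add_assoc, add_comm p]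

lemma hasSum_derivVec_tail (τ : ℝ) :
    HasSum (fun i => (τ ^ (i + p) / (i + p)!) • derivVec A b p t (i + p))
      (τ ^ p • phi p (τ • A) *ᵥ derivVec A b p t p) := by
  convert (hasSum_phi_smul_mulVec p A τ (derivVec A b p t p)).const_smul (τ ^ p) using 2 with i
  rw [derivVec_add, smul_smul, pow_add]
  ring_nf

end DerivVec

theorem stmt13 {N p : ℕ} (A : Matrix (Fin N) (Fin N) ℝ) (b : ℕ → Fin N → ℝ)
    (w : ℝ → Fin N → ℝ)
    (hw : ∀ t : ℝ, w t = ∑ j ∈ Finset.range (p + 1),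
        t ^ j • (phi j (t • A)).mulVec (b j))
    (ti τi : ℝ) (wt : ℕ → Fin N → ℝ)
    (hwt0 : wt 0 = w ti)
    (hwt : ∀ j : ℕ, 1 ≤ j → j ≤ p →
      wt j = A.mulVec (wt (j - 1)) +
        ∑ ℓ ∈ Finset.range (p - j + 1), (ti ^ ℓ / (ℓ ! : ℝ)) • b (j + ℓ)) :
    w (ti + τi)
      = τi ^ p • (phi p (τi • A)).mulVec (wt p) +
        ∑ j ∈ Finset.range p, (τi ^ j / (j ! : ℝ)) • wt j := by
  obtain ⟨C, K, hc⟩ := exists_norm_seriesCoeff_le A b p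
  have hw' : w = expSum (seriesCoeff A b p) :=
    funext fun t => (hw t).trans (expSum_seriesCoeff A b p t).symm
  have hwt_eq (j : ℕ) (hj : j ≤ p) : wt j = derivVec A b p ti j := by
    induction j with
    | zero => rw [hwt0, hw']; rfl
    | succ j ih =>
      rw [hwt (j + 1) (by omega) hj, Nat.add_sub_cancel, ih (by omega), derivVec_succ A b p ti hj]
  have htaylor := (hasSum_nat_add_iff' p).mpr (hasSum_expSum_add hc ti τi)
  rw [hwt_eq p le_rfl, sum_congr rfl fun j hj => by rw [hwt_eq j (mem_range.mp hj).le], hw',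
    ← sub_eq_iff_eq_add]
  exact htaylor.unique (hasSum_derivVec_tail A b p ti τi)
end
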